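/- Let c be a real number with 1 < c < 3 and c ≠ 2, let ε > 0 be fixed and sufficiently small, let P be sufficiently large and τ = P^{1-c-ε}. Then for every real ℓ with 1/τ ≤ ℓ ≪ P^c, the sum V_ℓ = Σ 1/|[n1^c]+[n2^c]-[n3^c]-[n4^c]|, taken over all integer quadruples (n1,n2,n3,n4) with P/2 < n1,n2,n3,n4 ≤ P and ℓ < |[n1^c]+[n2^c]-[n3^c]-[n4^c]| ≤ 2ℓ, satisfies V_ℓ ≪ P^{4-c}, with implied constant depending only on c and ε. -/

import Mathlib

/-!
Only the trivial bound is needed in the range `ℓ ≥ 1/τ ≥ P^(c-1)`. Fix `n₂, n₃, n₄`; then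
`|[n₁^c] + [n₂^c] - [n₃^c] - [n₄^c]| ≤ 2ℓ` traps `n₁^c` in an interval of length `4ℓ + 1`.
On `(P/2, P]` consecutive values of `n^c` are at least `c (P/2)^(c-1)` apart (Bernoulli's
inequality), so at most `O(ℓ P^(1-c) + 1) = O(ℓ P^(1-c))` values of `n₁` qualify. Hence
`O(P^3 · ℓ P^(1-c))` quadruples contribute to `V_ℓ`, each at most `1/ℓ`, giving `V_ℓ ≪ P^(4-c)`.
-/

open scoped Classical
open Finset Real

/-- `Dfl c q = [n₁^c] + [n₂^c] - [n₃^c] - [n₄^c]` for a quadruple `q = (n₁,n₂,n₃,n₄)`. -/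
noncomputable def Dfl (c : ℝ) (q : ℕ × ℕ × ℕ × ℕ) : ℤ :=
  ⌊(q.1 : ℝ) ^ c⌋ + ⌊(q.2.1 : ℝ) ^ c⌋ - ⌊(q.2.2.1 : ℝ) ^ c⌋ - ⌊(q.2.2.2 : ℝ) ^ c⌋

/-- `Vsum c P ℓ = Σ 1/|[n₁^c]+[n₂^c]-[n₃^c]-[n₄^c]|` over integer quadruples
`P/2 < n₁,n₂,n₃,n₄ ≤ P` with `ℓ < |[n₁^c]+[n₂^c]-[n₃^c]-[n₄^c]| ≤ 2ℓ`. -/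
noncomputable def Vsum (c P ℓ : ℝ) : ℝ :=
  ∑ q ∈ (((Finset.Ioc ⌊P / 2⌋₊ ⌊P⌋₊) ×ˢ (Finset.Ioc ⌊P / 2⌋₊ ⌊P⌋₊) ×ˢ
      (Finset.Ioc ⌊P / 2⌋₊ ⌊P⌋₊) ×ˢ (Finset.Ioc ⌊P / 2⌋₊ ⌊P⌋₊)).filter
    (fun q => ℓ < |((Dfl c q : ℤ) : ℝ)| ∧ |((Dfl c q : ℤ) : ℝ)| ≤ 2 * ℓ)),
    1 / |((Dfl c q : ℤ) : ℝ)|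

theorem mul_rpow_sub_one_mul_sub_le_rpow_sub_rpow {c a b : ℝ} (hc : 1 ≤ c) (ha : 0 < a)
    (hab : a ≤ b) : c * a ^ (c - 1) * (b - a) ≤ b ^ c - a ^ c := by
  have hbern : 1 + c * (b / a - 1) ≤ (1 + (b / a - 1)) ^ c :=
    one_add_mul_self_le_rpow_one_add (by linarith [div_nonneg (ha.le.trans hab) ha.le]) hc
  rw [add_sub_cancel, div_rpow (ha.le.trans hab) ha.le] at hbern
  have hac : 0 < a ^ c := rpow_pos_of_pos ha c
  have key : a ^ c * (1 + c * (b / a - 1)) ≤ b ^ c := by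
    rwa [le_div_iff₀' hac] at hbern
  have hpow : a ^ c = a ^ (c - 1) * a := by rw [← rpow_add_one ha.ne']; ring_nf
  calc c * a ^ (c - 1) * (b - a) = a ^ c * (1 + c * (b / a - 1)) - a ^ c := by
        rw [hpow]; field_simp; ring
    _ ≤ b ^ c - a ^ c := by linarith

theorem sub_le_div_of_rpow_sub_rpow_le {c N a b L : ℝ} (hc : 1 ≤ c) (hN : 0 < N) (hNa : N ≤ a)
    (hab : a ≤ b) (hL : b ^ c - a ^ c ≤ L) : b - a ≤ L / (c * N ^ (c - 1)) := by
  have hNc : N ^ (c - 1) ≤ a ^ (c - 1) := rpow_le_rpow hN.le hNa (by linarith)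
  rw [le_div_iff₀ (by positivity)]
  calc (b - a) * (c * N ^ (c - 1)) ≤ c * a ^ (c - 1) * (b - a) := by
        rw [mul_comm, mul_assoc, mul_assoc]
        gcongr
    _ ≤ L := (mul_rpow_sub_one_mul_sub_le_rpow_sub_rpow hc (hN.trans_le hNa) hab).trans hL

theorem Finset.card_le_of_forall_sub_le {s : Finset ℕ} {W : ℝ} (hW : 0 ≤ W)
    (h : ∀ m ∈ s, ∀ n ∈ s, m ≤ n → (n : ℝ) - m ≤ W) : (#s : ℝ) ≤ W + 1 := by
  rcases s.eq_empty_or_nonempty with rfl | hs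
  · simp; linarith
  have hsub : s ⊆ Icc (s.min' hs) (s.min' hs + ⌊W⌋₊) := fun n hn => by
    have hmin := s.min'_le n hn
    have hdist := h _ (s.min'_mem hs) n hn hmin
    rw [← Nat.cast_sub hmin] at hdist
    have := Nat.le_floor hdist
    rw [mem_Icc]; omega
  calc (#s : ℝ) ≤ ⌊W⌋₊ + 1 := by
        exact_mod_cast (card_le_card hsub).trans (by simp; omega)
    _ ≤ W + 1 := by linarith [Nat.floor_le hW]

theorem card_filter_rpow_mem_Icc_le {c N lo L : ℝ} (hc : 1 ≤ c) (hN : 0 < N) (hL : 0 ≤ L)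
    (s : Finset ℕ) (hs : ∀ n ∈ s, N ≤ (n : ℝ)) :
    (#(s.filter fun n : ℕ => (n : ℝ) ^ c ∈ Set.Icc lo (lo + L)) : ℝ)
      ≤ L / (c * N ^ (c - 1)) + 1 := by
  refine card_le_of_forall_sub_le (by positivity) fun m hm n hn hmn => ?_
  rw [mem_filter, Set.mem_Icc] at hm hn
  exact sub_le_div_of_rpow_sub_rpow_le hc hN (hs m hm.1) (by exact_mod_cast hmn)
    (by linarith)

theorem Finset.card_filter_product_eq_sum {α β : Type*} (s : Finset α) (t : Finset β)
    (p : α × β → Prop) [DecidablePred p] :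
    #((s ×ˢ t).filter p) = ∑ b ∈ t, #(s.filter fun a => p (a, b)) := by
  simp only [card_filter, sum_product_right]

theorem mem_Icc_of_abs_floor_sub_le {x R : ℝ} {k : ℤ} (h : |((⌊x⌋ - k : ℤ) : ℝ)| ≤ R) :
    x ∈ Set.Icc (k - R) (k - R + (2 * R + 1)) := by
  rw [abs_le, Int.cast_sub] at h
  constructor <;> linarith [Int.floor_le x, Int.lt_floor_add_one x]

theorem exists_Dfl_eq_floor_sub (c : ℝ) (b : ℕ × ℕ × ℕ) :
    ∃ k : ℤ, ∀ a : ℕ, Dfl c (a, b) = ⌊(a : ℝ) ^ c⌋ - k :=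
  ⟨⌊(b.2.1 : ℝ) ^ c⌋ + ⌊(b.2.2 : ℝ) ^ c⌋ - ⌊(b.1 : ℝ) ^ c⌋, fun a => by unfold Dfl; ring⟩

theorem card_filter_abs_Dfl_fiber_le {c N R : ℝ} (hc : 1 ≤ c) (hN : 0 < N) (hR : 0 ≤ R)
    (s : Finset ℕ) (hs : ∀ n ∈ s, N ≤ (n : ℝ)) (b : ℕ × ℕ × ℕ) :
    (#(s.filter fun a => |(Dfl c (a, b) : ℝ)| ≤ R) : ℝ) ≤ (2 * R + 1) / (c * N ^ (c - 1)) + 1 := by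
  obtain ⟨k, hk⟩ := exists_Dfl_eq_floor_sub c b
  refine le_trans (Nat.cast_le.mpr (card_le_card (monotone_filter_right s fun a _ ha => ?_)))
    (card_filter_rpow_mem_Icc_le (lo := k - R) hc hN (by positivity) s hs)
  rw [hk] at ha
  exact mem_Icc_of_abs_floor_sub_le ha

theorem card_filter_abs_Dfl_le {c N R : ℝ} (hc : 1 ≤ c) (hN : 0 < N) (hR : 0 ≤ R)
    (s : Finset ℕ) (hs : ∀ n ∈ s, N ≤ (n : ℝ)) :
    (#((s ×ˢ s ×ˢ s ×ˢ s).filter fun q => |(Dfl c q : ℝ)| ≤ R) : ℝ)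
      ≤ #s ^ 3 * ((2 * R + 1) / (c * N ^ (c - 1)) + 1) := by
  rw [card_filter_product_eq_sum, Nat.cast_sum]
  calc _ ≤ ∑ _b ∈ s ×ˢ s ×ˢ s, ((2 * R + 1) / (c * N ^ (c - 1)) + 1) :=
        sum_le_sum fun b _ => card_filter_abs_Dfl_fiber_le hc hN hR s hs b
    _ = _ := by simp only [sum_const, card_product, nsmul_eq_mul]; push_cast; ring

theorem Vsum_le {c P ℓ : ℝ} (hc : 1 ≤ c) (hP : 0 < P) (hℓ : 0 < ℓ) :
    Vsum c P ℓ ≤ P ^ 3 * ((4 * ℓ + 1) / (c * (P / 2) ^ (c - 1)) + 1) / ℓ := by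
  set s := Ioc ⌊P / 2⌋₊ ⌊P⌋₊
  have hs : ∀ n ∈ s, P / 2 ≤ (n : ℝ) := fun n hn => by
    have hlt := Nat.lt_floor_add_one (P / 2)
    have : ⌊P / 2⌋₊ + 1 ≤ n := (mem_Ioc.mp hn).1
    exact hlt.le.trans (by exact_mod_cast this)
  have hcard : (#s : ℝ) ≤ P := by
    rw [Nat.card_Ioc]
    exact (Nat.cast_le.mpr (Nat.sub_le _ _)).trans (Nat.floor_le hP.le)
  have hcount := card_filter_abs_Dfl_le hc (half_pos hP) (by positivity : 0 ≤ 2 * ℓ) s hs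
  rw [show 2 * (2 * ℓ) + 1 = 4 * ℓ + 1 by ring] at hcount
  calc Vsum c P ℓ
      ≤ #((s ×ˢ s ×ˢ s ×ˢ s).filter fun q => ℓ < |(Dfl c q : ℝ)| ∧ |(Dfl c q : ℝ)| ≤ 2 * ℓ)
          • (1 / ℓ) :=
        sum_le_card_nsmul _ _ _ fun q hq => one_div_le_one_div_of_le hℓ (mem_filter.mp hq).2.1.le
    _ ≤ #((s ×ˢ s ×ˢ s ×ˢ s).filter fun q => |(Dfl c q : ℝ)| ≤ 2 * ℓ) * (1 / ℓ) := by
        rw [nsmul_eq_mul]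
        gcongr
        exact fun h => h.2
    _ ≤ #s ^ 3 * ((4 * ℓ + 1) / (c * (P / 2) ^ (c - 1)) + 1) * (1 / ℓ) := by gcongr
    _ ≤ P ^ 3 * ((4 * ℓ + 1) / (c * (P / 2) ^ (c - 1)) + 1) / ℓ := by
        rw [mul_one_div]; gcongr

theorem Vsum_le_mul_rpow {c P ℓ : ℝ} (hc : 1 ≤ c) (hP : 1 ≤ P) (hℓ : P ^ (c - 1) ≤ ℓ) :
    Vsum c P ℓ ≤ (5 * 2 ^ (c - 1) / c + 1) * P ^ (4 - c) := by
  have hP0 : 0 < P := by linarith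
  have hx : 1 ≤ P ^ (c - 1) := one_le_rpow hP (by linarith)
  refine (Vsum_le hc hP0 (by linarith)).trans ?_
  have hhalf : (P / 2) ^ (c - 1) = P ^ (c - 1) / 2 ^ (c - 1) := div_rpow hP0.le zero_le_two _
  have hexp : P ^ (4 - c) = P ^ 3 / P ^ (c - 1) := by
    rw [show 4 - c = (3 : ℕ) - (c - 1) by push_cast; ring, rpow_sub hP0, rpow_natCast]
  have h2 : 0 < (2 : ℝ) ^ (c - 1) := by positivity
  have hP3 : 0 < P ^ 3 := by positivity
  -- `(4ℓ + 1)/ℓ ≤ 5` and `1/ℓ ≤ P^(1-c)`, as `ℓ ≥ P^(c-1) ≥ 1`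
  rw [hhalf, hexp, div_le_iff₀ (by linarith)]
  field_simp
  nlinarith [mul_pos hP3 h2, mul_pos (mul_pos hP3 h2) (by linarith : (0 : ℝ) < P ^ (c - 1)),
    mul_pos hP3 (by linarith : (0 : ℝ) < c)]

theorem stmt_7_general (c : ℝ) (hc1 : 1 < c) :
    ∃ ε₀ > 0, ∀ ε : ℝ, 0 < ε → ε ≤ ε₀ →
      ∀ A > 0, ∃ C > 0, ∃ P₀ : ℝ, ∀ P : ℝ, P₀ ≤ P →
        ∀ τ : ℝ, τ = P ^ (1 - c - ε) →
          ∀ ℓ : ℝ, 1 / τ ≤ ℓ → ℓ ≤ A * P ^ c →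
            Vsum c P ℓ ≤ C * P ^ (4 - c) := by
  refine ⟨1, one_pos, fun ε hε _ A _ => ⟨5 * 2 ^ (c - 1) / c + 1, by positivity, 1,
    fun P hP τ hτ ℓ hℓ _ => ?_⟩⟩
  refine Vsum_le_mul_rpow hc1.le hP ?_
  calc P ^ (c - 1) ≤ P ^ (c + ε - 1) := rpow_le_rpow_of_exponent_le hP (by linarith)
    _ = 1 / τ := by rw [hτ, one_div, ← rpow_neg (by linarith)]; ring_nf
    _ ≤ ℓ := hℓ

theorem stmt_7 (c : ℝ) (hc1 : 1 < c) (hc2 : c < 3) (hc3 : c ≠ 2) :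
    ∃ ε₀ > 0, ∀ ε : ℝ, 0 < ε → ε ≤ ε₀ →
      ∀ A > 0, ∃ C > 0, ∃ P₀ : ℝ, ∀ P : ℝ, P₀ ≤ P →
        ∀ τ : ℝ, τ = P ^ (1 - c - ε) →
          ∀ ℓ : ℝ, 1 / τ ≤ ℓ → ℓ ≤ A * P ^ c →
            Vsum c P ℓ ≤ C * P ^ (4 - c) :=
  stmt_7_general c hc1
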